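/- arXiv:2005.03763 — 4 statements merged into one kernel-verified Lean document; each statement's English description precedes it below -/
import Mathlib

section
/- For any nonempty set F ⊆ ℝ^d and 0 < θ₁ < θ₂ < 1, the Assouad spectrum satisfies ((1−θ₂)/(1−θ₁)) · dim_A^{θ₂} F ≤ dim_A^{θ₁} F. -/
open Filter MeasureTheory
open scoped Topology ENNReal

/-- `coverN E r` is the smallest number of sets of diameter at most `r` needed to cover `E`. -/
noncomputable def coverN {X : Type*} [PseudoMetricSpace X] (E : Set X) (r : ℝ) : ℕ :=
  sInf {n : ℕ | ∃ s : Finset (Set X),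
    s.card = n ∧ (∀ U ∈ s, Metric.diam U ≤ r) ∧ E ⊆ ⋃ U ∈ s, U}

/-- The Assouad spectrum of a set at parameter `θ`. -/
noncomputable def assouadSpectrum {X : Type*} [PseudoMetricSpace X] (F : Set X) (θ : ℝ) : ℝ :=
  sInf {α : ℝ | 0 ≤ α ∧ ∃ C : ℝ, 0 < C ∧ ∀ x ∈ F, ∀ r : ℝ, 0 < r → r < 1 →
    (coverN (Metric.closedBall x (r ^ θ) ∩ F) r : ℝ) ≤ C * (r ^ θ / r) ^ α}

lemma coverN_le_card {X : Type*} [PseudoMetricSpace X] {E : Set X} {r : ℝ}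
    (s : Finset (Set X)) (hd : ∀ U ∈ s, Metric.diam U ≤ r) (hc : E ⊆ ⋃ U ∈ s, U) :
    coverN E r ≤ s.card :=
  Nat.sInf_le ⟨s, rfl, hd, hc⟩

lemma coverN_mono {X : Type*} [PseudoMetricSpace X] {E E' : Set X} {r : ℝ}
    (hEE : E ⊆ E')
    (hw : ∃ s : Finset (Set X), (∀ U ∈ s, Metric.diam U ≤ r) ∧ E' ⊆ ⋃ U ∈ s, U) :
    coverN E r ≤ coverN E' r := by
  obtain ⟨s₀, hs₀d, hs₀c⟩ := hw
  have hne : {n : ℕ | ∃ s : Finset (Set X),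
      s.card = n ∧ (∀ U ∈ s, Metric.diam U ≤ r) ∧ E' ⊆ ⋃ U ∈ s, U}.Nonempty :=
    ⟨s₀.card, s₀, rfl, hs₀d, hs₀c⟩
  obtain ⟨s, hcard, hd, hc⟩ := Nat.sInf_mem hne
  calc coverN E r ≤ s.card := coverN_le_card s hd (hEE.trans hc)
    _ = coverN E' r := hcard

lemma euclid_coord_le {d : ℕ} (y x : EuclideanSpace ℝ (Fin d)) (i : Fin d) :
    dist (y i) (x i) ≤ dist y x := by
  rw [EuclideanSpace.dist_eq]
  have h0 : dist (y i) (x i) = Real.sqrt (dist (y i) (x i) ^ 2) :=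
    (Real.sqrt_sq dist_nonneg).symm
  rw [h0]
  exact Real.sqrt_le_sqrt
    (Finset.single_le_sum (f := fun j => dist (y j) (x j) ^ 2)
      (fun j _ => sq_nonneg _) (Finset.mem_univ i))

/-- Grid covering of a Euclidean ball by cubes of diameter at most `r`. -/
lemma grid_cover (d : ℕ) (x : EuclideanSpace ℝ (Fin d)) (R r : ℝ) (hR : 0 ≤ R) (hr : 0 < r) :
    ∃ s : Finset (Set (EuclideanSpace ℝ (Fin d))),
      (∀ U ∈ s, Metric.diam U ≤ r) ∧ Metric.closedBall x R ⊆ ⋃ U ∈ s, U ∧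
      (s.card : ℝ) ≤ (2 * R * (Real.sqrt d + 1) / r + 2) ^ d := by
  classical
  set δ : ℝ := r / (Real.sqrt d + 1) with hδdef
  have hsd : (0:ℝ) ≤ Real.sqrt d := Real.sqrt_nonneg _
  have hsd1 : (0:ℝ) < Real.sqrt d + 1 := by linarith
  have hδ : 0 < δ := div_pos hr hsd1
  set m : ℕ := ⌈2 * R / δ⌉₊ + 1 with hmdef
  set U : (Fin d → Fin m) → Set (EuclideanSpace ℝ (Fin d)) :=
    fun k => {y | ∀ i, y i ∈ Set.Icc (x i - R + (k i : ℝ) * δ) (x i - R + (k i : ℝ) * δ + δ)}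
    with hUdef
  refine ⟨Finset.image U Finset.univ, ?_, ?_, ?_⟩
  · -- diameter bound
    intro V hV
    obtain ⟨k, -, rfl⟩ := Finset.mem_image.mp hV
    apply Metric.diam_le_of_forall_dist_le hr.le
    intro y hy z hz
    have hcoord : ∀ i, dist (y i) (z i) ^ 2 ≤ δ ^ 2 := by
      intro i
      obtain ⟨hy1, hy2⟩ := hy i
      obtain ⟨hz1, hz2⟩ := hz i
      rw [Real.dist_eq, sq_abs]
      have := sq_le_sq' (a := y i - z i) (b := δ) (by linarith) (by linarith)
      exact this
    rw [EuclideanSpace.dist_eq]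
    have hsum : ∑ i, dist (y i) (z i) ^ 2 ≤ (d : ℝ) * δ ^ 2 := by
      calc ∑ i, dist (y i) (z i) ^ 2 ≤ ∑ _i : Fin d, δ ^ 2 :=
            Finset.sum_le_sum (fun i _ => hcoord i)
        _ = (d : ℝ) * δ ^ 2 := by rw [Finset.sum_const, Finset.card_univ, Fintype.card_fin, nsmul_eq_mul]
    have h1 : Real.sqrt (∑ i, dist (y i) (z i) ^ 2) ≤ Real.sqrt ((d:ℝ) * δ ^ 2) :=
      Real.sqrt_le_sqrt hsum
    have h2 : Real.sqrt ((d:ℝ) * δ ^ 2) = Real.sqrt d * δ := by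
      rw [Real.sqrt_mul (by positivity), Real.sqrt_sq hδ.le]
    have h3 : Real.sqrt d * δ ≤ r := by
      rw [hδdef]
      rw [mul_div_assoc'] -- √d * r / (√d+1)
      rw [div_le_iff₀ hsd1]
      nlinarith
    calc Real.sqrt (∑ i, dist (y i) (z i) ^ 2) ≤ Real.sqrt d * δ := by rw [← h2]; exact h1
      _ ≤ r := h3
  · -- covering
    intro y hy
    have hyx : dist y x ≤ R := Metric.mem_closedBall.mp hy
    have hc : ∀ i, |y i - x i| ≤ R := by
      intro i
      have := (euclid_coord_le y x i).trans hyx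
      rwa [Real.dist_eq] at this
    have hmpos : ⌈2 * R / δ⌉₊ < m := by omega
    set k : Fin d → Fin m := fun i =>
      ⟨min ⌊(y i - (x i - R)) / δ⌋₊ (m - 1), by
        have := min_le_right ⌊(y i - (x i - R)) / δ⌋₊ (m - 1); omega⟩ with hkdef
    have hyU : y ∈ U k := by
      intro i
      set t : ℝ := y i - (x i - R) with htdef
      have ht0 : 0 ≤ t := by have := abs_le.mp (hc i); simp only [htdef]; linarith [this.1]
      have ht2 : t ≤ 2 * R := by have := abs_le.mp (hc i); simp only [htdef]; linarith [this.2]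
      have hki : (k i : ℕ) = min ⌊t / δ⌋₊ (m - 1) := rfl
      constructor
      · -- lower bound
        have h1 : ((k i : ℕ) : ℝ) ≤ (⌊t / δ⌋₊ : ℝ) := by
          rw [hki]; exact_mod_cast min_le_left _ _
        have h2 : (⌊t / δ⌋₊ : ℝ) ≤ t / δ := Nat.floor_le (by positivity)
        have : ((k i : ℕ) : ℝ) * δ ≤ t := by
          calc ((k i : ℕ) : ℝ) * δ ≤ (t / δ) * δ := by
                apply mul_le_mul_of_nonneg_right (h1.trans h2) hδ.le
            _ = t := by field_simp
        simp only [htdef] at this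
        linarith
      · -- upper bound
        have hup : t ≤ (((k i : ℕ) : ℝ) + 1) * δ := by
          rcases min_cases ⌊t / δ⌋₊ (m - 1) with ⟨he, _⟩ | ⟨he, hlt⟩
          · have h2 : t / δ < (⌊t / δ⌋₊ : ℝ) + 1 := Nat.lt_floor_add_one _
            have : t < ((⌊t / δ⌋₊ : ℝ) + 1) * δ := by
              calc t = (t / δ) * δ := by field_simp
                _ < ((⌊t / δ⌋₊ : ℝ) + 1) * δ := by
                    apply mul_lt_mul_of_pos_right h2 hδ
            rw [hki, he]
            linarith
          · -- k i = m - 1, and m - 1 = ⌈2R/δ⌉₊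
            have hm1 : m - 1 = ⌈2 * R / δ⌉₊ := by omega
            have h2 : 2 * R / δ ≤ (⌈2 * R / δ⌉₊ : ℝ) := Nat.le_ceil _
            have h3 : 2 * R ≤ (⌈2 * R / δ⌉₊ : ℝ) * δ := by
              calc 2 * R = (2 * R / δ) * δ := by field_simp
                _ ≤ (⌈2 * R / δ⌉₊ : ℝ) * δ := mul_le_mul_of_nonneg_right h2 hδ.le
            rw [hki, he, hm1]
            have : ((⌈2 * R / δ⌉₊ : ℕ) : ℝ) * δ ≤ (((⌈2 * R / δ⌉₊ : ℕ) : ℝ) + 1) * δ := by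
              nlinarith
            linarith
        have : t ≤ ((k i : ℕ) : ℝ) * δ + δ := by linarith [hup]; 
        simp only [htdef] at this
        linarith
    simp only [Set.mem_iUnion]
    exact ⟨U k, ⟨Finset.mem_image.mpr ⟨k, Finset.mem_univ k, rfl⟩, hyU⟩⟩
  · -- cardinality bound
    have h1 : (Finset.image U Finset.univ).card ≤ m ^ d := by
      calc (Finset.image U Finset.univ).card ≤ (Finset.univ : Finset (Fin d → Fin m)).card :=
            Finset.card_image_le
        _ = m ^ d := by simp [Finset.card_univ]
    have hm : (m : ℝ) ≤ 2 * R * (Real.sqrt d + 1) / r + 2 := by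
      have h2 : (⌈2 * R / δ⌉₊ : ℝ) < 2 * R / δ + 1 := Nat.ceil_lt_add_one (by positivity)
      have h3 : 2 * R / δ = 2 * R * (Real.sqrt d + 1) / r := by
        rw [hδdef]; field_simp
      have : (m : ℝ) = (⌈2 * R / δ⌉₊ : ℝ) + 1 := by rw [hmdef]; push_cast; ring
      rw [this, ← h3]
      linarith
    calc ((Finset.image U Finset.univ).card : ℝ) ≤ ((m : ℕ) ^ d : ℕ) := by exact_mod_cast h1
      _ = (m : ℝ) ^ d := by push_cast; ring
      _ ≤ (2 * R * (Real.sqrt d + 1) / r + 2) ^ d := by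
          apply pow_le_pow_left₀ (by positivity) hm

/-- The defining set of the Assouad spectrum. -/
def specSet {X : Type*} [PseudoMetricSpace X] (F : Set X) (θ : ℝ) : Set ℝ :=
  {α : ℝ | 0 ≤ α ∧ ∃ C : ℝ, 0 < C ∧ ∀ x ∈ F, ∀ r : ℝ, 0 < r → r < 1 →
    (coverN (Metric.closedBall x (r ^ θ) ∩ F) r : ℝ) ≤ C * (r ^ θ / r) ^ α}

lemma assouadSpectrum_eq {X : Type*} [PseudoMetricSpace X] (F : Set X) (θ : ℝ) :
    assouadSpectrum F θ = sInf (specSet F θ) := rfl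

lemma natDim_mem_specSet (d : ℕ) (F : Set (EuclideanSpace ℝ (Fin d))) (θ : ℝ)
    (hθ0 : 0 < θ) (hθ1 : θ < 1) : ((d : ℝ)) ∈ specSet F θ := by
  refine ⟨Nat.cast_nonneg d, (2 * (Real.sqrt d + 1) + 2) ^ d, by positivity, ?_⟩
  intro x hx r hr hr1
  have hRpos : (0:ℝ) < r ^ θ := Real.rpow_pos_of_pos hr θ
  obtain ⟨s, hsd, hsc, hscard⟩ := grid_cover d x (r ^ θ) r hRpos.le hr
  have hcover : Metric.closedBall x (r ^ θ) ∩ F ⊆ ⋃ U ∈ s, U :=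
    (Set.inter_subset_left).trans hsc
  have h1 : (coverN (Metric.closedBall x (r ^ θ) ∩ F) r : ℝ) ≤ (s.card : ℝ) := by
    exact_mod_cast coverN_le_card s hsd hcover
  have hq1 : 1 ≤ r ^ θ / r := by
    rw [le_div_iff₀ hr, one_mul]
    calc r = r ^ (1:ℝ) := (Real.rpow_one r).symm
      _ ≤ r ^ θ := Real.rpow_le_rpow_of_exponent_ge hr hr1.le hθ1.le
  have hq0 : (0:ℝ) ≤ r ^ θ / r := by positivity
  have hbound : 2 * r ^ θ * (Real.sqrt d + 1) / r + 2 ≤ (2 * (Real.sqrt d + 1) + 2) * (r ^ θ / r) := by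
    have he : 2 * r ^ θ * (Real.sqrt d + 1) / r = 2 * (Real.sqrt d + 1) * (r ^ θ / r) := by
      field_simp
    rw [he]
    nlinarith [hq1]
  have h2 : ((2 * r ^ θ * (Real.sqrt d + 1) / r + 2) : ℝ) ^ d
      ≤ ((2 * (Real.sqrt d + 1) + 2) * (r ^ θ / r)) ^ d := by
    apply pow_le_pow_left₀ (by positivity) hbound
  have h3 : ((2 * (Real.sqrt d + 1) + 2) * (r ^ θ / r)) ^ d
      = (2 * (Real.sqrt d + 1) + 2) ^ d * (r ^ θ / r) ^ (d : ℝ) := by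
    rw [mul_pow, Real.rpow_natCast]
  calc (coverN (Metric.closedBall x (r ^ θ) ∩ F) r : ℝ)
      ≤ (s.card : ℝ) := h1
    _ ≤ (2 * r ^ θ * (Real.sqrt d + 1) / r + 2) ^ d := hscard
    _ ≤ ((2 * (Real.sqrt d + 1) + 2) * (r ^ θ / r)) ^ d := h2
    _ = (2 * (Real.sqrt d + 1) + 2) ^ d * (r ^ θ / r) ^ (d:ℝ) := h3

lemma specSet_transfer (d : ℕ) (F : Set (EuclideanSpace ℝ (Fin d))) (θ₁ θ₂ : ℝ)
    (h0 : 0 < θ₁) (h12 : θ₁ < θ₂) (h1 : θ₂ < 1) {α : ℝ} (hα : α ∈ specSet F θ₁) :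
    (1 - θ₁) / (1 - θ₂) * α ∈ specSet F θ₂ := by
  obtain ⟨hα0, C, hC, hbd⟩ := hα
  have hθ2 : (0:ℝ) < 1 - θ₂ := by linarith
  have hθ1' : (0:ℝ) < 1 - θ₁ := by linarith
  refine ⟨by positivity, C, hC, ?_⟩
  intro x hx r hr hr1
  have hsub : Metric.closedBall x (r ^ θ₂) ⊆ Metric.closedBall x (r ^ θ₁) :=
    Metric.closedBall_subset_closedBall
      (Real.rpow_le_rpow_of_exponent_ge hr hr1.le h12.le)
  have hR1pos : (0:ℝ) < r ^ θ₁ := Real.rpow_pos_of_pos hr θ₁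
  obtain ⟨s, hsd, hsc, -⟩ := grid_cover d x (r ^ θ₁) r hR1pos.le hr
  have hmono : coverN (Metric.closedBall x (r ^ θ₂) ∩ F) r
      ≤ coverN (Metric.closedBall x (r ^ θ₁) ∩ F) r := by
    apply coverN_mono (Set.inter_subset_inter_left F hsub)
    exact ⟨s, hsd, (Set.inter_subset_left).trans hsc⟩
  have key : (r ^ θ₁ / r) ^ α = (r ^ θ₂ / r) ^ ((1 - θ₁) / (1 - θ₂) * α) := by
    have e1 : ∀ θ : ℝ, r ^ θ / r = r ^ (θ - 1) := by
      intro θ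
      rw [Real.rpow_sub hr, Real.rpow_one]
    rw [e1 θ₁, e1 θ₂, ← Real.rpow_mul hr.le, ← Real.rpow_mul hr.le]
    congr 1
    field_simp
    ring
  calc (coverN (Metric.closedBall x (r ^ θ₂) ∩ F) r : ℝ)
      ≤ (coverN (Metric.closedBall x (r ^ θ₁) ∩ F) r : ℝ) := by exact_mod_cast hmono
    _ ≤ C * (r ^ θ₁ / r) ^ α := hbd x hx r hr hr1
    _ = C * (r ^ θ₂ / r) ^ ((1 - θ₁) / (1 - θ₂) * α) := by rw [key]

/-- For any nonempty `F ⊆ ℝ^d` and `0 < θ₁ < θ₂ < 1`,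
`((1-θ₂)/(1-θ₁)) · dim_A^{θ₂} F ≤ dim_A^{θ₁} F`. -/
theorem assouadSpectrum_coeff_bound (d : ℕ) (F : Set (EuclideanSpace ℝ (Fin d)))
    (hne : F.Nonempty) (θ₁ θ₂ : ℝ) (h0 : 0 < θ₁) (h12 : θ₁ < θ₂) (h1 : θ₂ < 1) :
    (1 - θ₂) / (1 - θ₁) * assouadSpectrum F θ₂ ≤ assouadSpectrum F θ₁ := by
  have hθ2 : (0:ℝ) < 1 - θ₂ := by linarith
  have hθ1' : (0:ℝ) < 1 - θ₁ := by linarith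
  rw [assouadSpectrum_eq, assouadSpectrum_eq]
  have hS1ne : (specSet F θ₁).Nonempty := ⟨(d : ℝ), natDim_mem_specSet d F θ₁ h0 (h12.trans h1)⟩
  have hS2bdd : BddBelow (specSet F θ₂) := ⟨0, fun a ha => ha.1⟩
  apply le_csInf hS1ne
  intro α hα
  have hmem : (1 - θ₁) / (1 - θ₂) * α ∈ specSet F θ₂ :=
    specSet_transfer d F θ₁ θ₂ h0 h12 h1 hα
  have h2 : sInf (specSet F θ₂) ≤ (1 - θ₁) / (1 - θ₂) * α := csInf_le hS2bdd hmem
  have h3 : (1 - θ₂) / (1 - θ₁) * sInf (specSet F θ₂)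
      ≤ (1 - θ₂) / (1 - θ₁) * ((1 - θ₁) / (1 - θ₂) * α) :=
    mul_le_mul_of_nonneg_left h2 (by positivity)
  have h4 : (1 - θ₂) / (1 - θ₁) * ((1 - θ₁) / (1 - θ₂) * α) = α := by
    field_simp
  linarith
end

section
/- For a measure μ supported on a compact set F ⊆ ℝ^d and θ ∈ (0,1), the Assouad spectrum of μ satisfies (upper box dimension of μ) ≤ dim_A^θ μ ≤ (upper box dimension of μ)/(1−θ). -/
/-!
Write `t = s + ε`. If `μ(B(x, r^θ)) ≤ C r^{(θ-1)s} μ(B(x, r))`, a lower bound `c ρ^t` at the scale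
`ρ = r^θ` propagates to the lower bound `c r^t` at the smaller scale `r` as soon as
`C r^{(1-θ)ε} ≤ 1`, which holds for all small `r`. Since `r^{θ^n} → 1`, finitely many such steps
reach every small radius from a fixed scale `r₀`, where compactness of the support gives a uniform
lower bound on the mass of balls; hence the spectrum bounds the upper box dimension from above.
Conversely, a lower bound `μ(B(x, r)) ≥ C r^a` together with the uniform finiteness of
`μ(B(x, r^θ))` gives the spectrum bound with exponent `a / (1 - θ)`, because
`(r^θ / r)^{a / (1 - θ)} = r^{-a}`.
-/

open Filter MeasureTheory
open scoped Topology ENNReal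

/-- The support of a measure: points all of whose balls have positive measure. -/
def measSupport {X : Type*} [PseudoMetricSpace X] [MeasurableSpace X]
    (μ : Measure X) : Set X :=
  {x | ∀ r : ℝ, 0 < r → μ (Metric.ball x r) ≠ 0}

/-- The upper box dimension of a measure. -/
noncomputable def measUpperBoxDim {X : Type*} [PseudoMetricSpace X] [MeasurableSpace X]
    (μ : Measure X) : ℝ :=
  sInf {a : ℝ | 0 ≤ a ∧ ∃ C : ℝ, 0 < C ∧ ∀ x ∈ measSupport μ, ∀ r : ℝ, 0 < r →
    ENNReal.ofReal r < EMetric.diam (measSupport μ) →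
    ENNReal.ofReal (C * r ^ a) ≤ μ (Metric.closedBall x r)}

/-- The Assouad spectrum of a measure at parameter `θ`. -/
noncomputable def measAssouadSpectrum {X : Type*} [PseudoMetricSpace X] [MeasurableSpace X]
    (μ : Measure X) (θ : ℝ) : ℝ :=
  sInf {s : ℝ | 0 ≤ s ∧ ∃ C : ℝ, 0 < C ∧ ∀ x ∈ measSupport μ, ∀ r : ℝ, 0 < r →
    ENNReal.ofReal r < EMetric.diam (measSupport μ) →
    μ (Metric.closedBall x (r ^ θ)) ≤
      ENNReal.ofReal (C * (r ^ θ / r) ^ s) * μ (Metric.closedBall x r)}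

open Metric

theorem Real.forall_pos_of_rpow_induction {P : ℝ → Prop} {θ r₀ : ℝ} (hθ0 : 0 ≤ θ) (hθ1 : θ < 1)
    (hr₀ : r₀ < 1) (base : ∀ r, r₀ ≤ r → P r)
    (step : ∀ r, 0 < r → r < r₀ → P (r ^ θ) → P r) : ∀ r, 0 < r → P r := by
  have key : ∀ n : ℕ, ∀ r, 0 < r → r₀ ≤ r ^ (θ ^ n) → P r := by
    intro n
    induction n with
    | zero => simpa using fun r _ => base r
    | succ n ih =>
      intro r hr hn
      by_cases hr₀r : r₀ ≤ r
      · exact base r hr₀r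
      · refine step r hr (not_le.1 hr₀r) (ih _ (Real.rpow_pos_of_pos hr θ) ?_)
        rwa [← Real.rpow_mul hr.le, ← pow_succ']
  intro r hr
  have hlim : Tendsto (fun n : ℕ => r ^ (θ ^ n)) atTop (𝓝 1) := by
    have := (Real.continuousAt_const_rpow hr.ne').tendsto.comp
      (tendsto_pow_atTop_nhds_zero_of_lt_one hθ0 hθ1)
    rwa [Real.rpow_zero] at this
  obtain ⟨n, hn⟩ := (hlim.eventually_const_lt hr₀).exists
  exact key n r hr hn.le

theorem Real.sInf_le_sInf_of_forall_lt_mem {A B : Set ℝ} (hB : BddBelow B) (hA : A.Nonempty)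
    (h : ∀ a ∈ A, ∀ b, a < b → b ∈ B) : sInf B ≤ sInf A :=
  le_csInf hA fun a ha => le_of_forall_pos_le_add fun _ hε =>
    csInf_le hB (h a ha _ (lt_add_of_pos_right a hε))

theorem Real.sInf_le_sInf_div_of_div_mem {A B : Set ℝ} {c : ℝ} (hc : 0 < c) (hA : BddBelow A)
    (hB : B.Nonempty) (h : ∀ b ∈ B, b / c ∈ A) : sInf A ≤ sInf B / c := by
  rw [le_div_iff₀ hc]
  exact le_csInf hB fun b hb => (le_div_iff₀ hc).1 (csInf_le hA (h b hb))

theorem ENNReal.ofReal_mul_rpow_le_of_le_rpow_mul {a b : ℝ≥0∞} {c C r θ s t : ℝ} (hc : 0 ≤ c)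
    (hC : 0 < C) (hr : 0 < r) (hsmall : C * r ^ ((1 - θ) * (t - s)) ≤ 1)
    (ha : ENNReal.ofReal (c * (r ^ θ) ^ t) ≤ a)
    (hab : a ≤ ENNReal.ofReal (C * (r ^ θ / r) ^ s) * b) :
    ENNReal.ofReal (c * r ^ t) ≤ b := by
  have hK : 0 < C * (r ^ θ / r) ^ s := by positivity
  have hreal : c * r ^ t ≤ c * (r ^ θ) ^ t / (C * (r ^ θ / r) ^ s) := by
    have hsplit : r ^ t = r ^ (θ * t) / r ^ ((θ - 1) * s) * r ^ ((1 - θ) * (t - s)) := by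
      rw [← Real.rpow_sub hr, ← Real.rpow_add hr]
      ring_nf
    rw [← Real.rpow_mul hr.le, ← Real.rpow_sub_one hr.ne', ← Real.rpow_mul hr.le, hsplit,
      le_div_iff₀ (by positivity)]
    calc c * (r ^ (θ * t) / r ^ ((θ - 1) * s) * r ^ ((1 - θ) * (t - s))) *
          (C * r ^ ((θ - 1) * s))
        = c * r ^ (θ * t) * (C * r ^ ((1 - θ) * (t - s))) := by
          field_simp
      _ ≤ c * r ^ (θ * t) * 1 := by gcongr
      _ = c * r ^ (θ * t) := mul_one _
  calc ENNReal.ofReal (c * r ^ t)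
      ≤ ENNReal.ofReal (c * (r ^ θ) ^ t / (C * (r ^ θ / r) ^ s)) := ENNReal.ofReal_le_ofReal hreal
    _ = ENNReal.ofReal (c * (r ^ θ) ^ t) / ENNReal.ofReal (C * (r ^ θ / r) ^ s) :=
        ENNReal.ofReal_div_of_pos hK
    _ ≤ b := ENNReal.div_le_of_le_mul' (ha.trans hab)

section MeasSupport

variable {X : Type*} [PseudoMetricSpace X] [MeasurableSpace X] {μ : Measure X}

def HasBoxLowerBound (μ : Measure X) (a : ℝ) : Prop :=
  ∃ C : ℝ, 0 < C ∧ ∀ x ∈ measSupport μ, ∀ r : ℝ, 0 < r →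
    ENNReal.ofReal r < ediam (measSupport μ) →
    ENNReal.ofReal (C * r ^ a) ≤ μ (closedBall x r)

def HasAssouadSpectrumBound (μ : Measure X) (θ s : ℝ) : Prop :=
  ∃ C : ℝ, 0 < C ∧ ∀ x ∈ measSupport μ, ∀ r : ℝ, 0 < r →
    ENNReal.ofReal r < ediam (measSupport μ) →
    μ (closedBall x (r ^ θ)) ≤ ENNReal.ofReal (C * (r ^ θ / r) ^ s) * μ (closedBall x r)

theorem measUpperBoxDim_eq_sInf (μ : Measure X) :
    measUpperBoxDim μ = sInf {a | 0 ≤ a ∧ HasBoxLowerBound μ a} := rfl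

theorem measAssouadSpectrum_eq_sInf (μ : Measure X) (θ : ℝ) :
    measAssouadSpectrum μ θ = sInf {s | 0 ≤ s ∧ HasAssouadSpectrumBound μ θ s} := rfl

theorem isClosed_measSupport : IsClosed (measSupport μ) := by
  refine isClosed_of_closure_subset fun x hx r hr hμ => ?_
  obtain ⟨y, hy, hxy⟩ := Metric.mem_closure_iff.1 hx (r / 2) (half_pos hr)
  refine hy (r / 2) (half_pos hr) (measure_mono_null (ball_subset_ball' ?_) hμ)
  rw [dist_comm]
  linarith

theorem IsCompact.exists_pos_le_measure_closedBall {K : Set X} (hK : IsCompact K)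
    (hKμ : K ⊆ measSupport μ) {r : ℝ} (hr : 0 < r) :
    ∃ m : ℝ, 0 < m ∧ ∀ x ∈ K, ENNReal.ofReal m ≤ μ (closedBall x r) := by
  refine hK.induction_on ⟨1, one_pos, by simp⟩
    (fun s t hst ⟨m, hm, ht⟩ => ⟨m, hm, fun x hx => ht x (hst hx)⟩)
    (fun s t ⟨m, hm, hs⟩ ⟨m', hm', ht⟩ => ⟨min m m', lt_min hm hm', ?_⟩) fun x hx => ?_
  · rintro y (hy | hy)
    · exact (ENNReal.ofReal_le_ofReal (min_le_left _ _)).trans (hs y hy)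
    · exact (ENNReal.ofReal_le_ofReal (min_le_right _ _)).trans (ht y hy)
  · obtain ⟨m, -, hm0, hm⟩ := ENNReal.lt_iff_exists_real_btwn.1
      (pos_iff_ne_zero.2 (hKμ hx (r / 2) (half_pos hr)))
    refine ⟨ball x (r / 2), mem_nhdsWithin_of_mem_nhds (ball_mem_nhds x (half_pos hr)), m,
      ENNReal.ofReal_pos.1 hm0, fun y hy => hm.le.trans (measure_mono ?_)⟩
    refine ball_subset_closedBall.trans (closedBall_subset_closedBall' ?_)
    rw [dist_comm]
    linarith [mem_ball.1 hy]

theorem HasAssouadSpectrumBound.hasBoxLowerBound {θ s t : ℝ} (hS : IsCompact (measSupport μ))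
    (hθ0 : 0 ≤ θ) (hθ1 : θ < 1) (ht : 0 ≤ t) (hst : s < t)
    (h : HasAssouadSpectrumBound μ θ s) : HasBoxLowerBound μ t := by
  obtain ⟨C, hC, H⟩ := h
  have hdiam := hS.isBounded.ediam_ne_top
  obtain hD0 | hD0 := eq_or_ne (ediam (measSupport μ)) 0
  · exact ⟨1, one_pos, fun x _ r _ hr => absurd hr (by simp [hD0])⟩
  set D := (ediam (measSupport μ)).toReal
  have hD : 0 < D := ENNReal.toReal_pos hD0 hdiam
  set κ := (1 - θ) * (t - s)
  have hκ : 0 < κ := mul_pos (by linarith) (by linarith)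
  have hsmall : ∀ᶠ r in 𝓝[>] (0 : ℝ), ((r < 1 ∧ r < D) ∧ C * r ^ κ < 1) ∧ 0 < r := by
    have hlim : Tendsto (fun r : ℝ => C * r ^ κ) (𝓝 0) (𝓝 0) := by
      simpa [Real.zero_rpow hκ.ne'] using
        ((Real.continuousAt_rpow_const 0 κ (Or.inr hκ.le)).tendsto.const_mul C)
    exact ((((eventually_lt_nhds one_pos).and (eventually_lt_nhds hD)).and
      (hlim.eventually_lt_const one_pos)).filter_mono nhdsWithin_le_nhds).and self_mem_nhdsWithin
  obtain ⟨r₀, ⟨⟨hr₀1, hr₀D⟩, hr₀C⟩, hr₀⟩ := hsmall.exists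
  obtain ⟨m, hm, hmass⟩ := hS.exists_pos_le_measure_closedBall subset_rfl hr₀
  set R := max 1 D
  have hR : 0 < R := lt_max_of_lt_left one_pos
  have hbound : ∀ r, 0 < r → r ≤ R → ∀ x ∈ measSupport μ,
      ENNReal.ofReal (m / R ^ t * r ^ t) ≤ μ (closedBall x r) := by
    refine Real.forall_pos_of_rpow_induction hθ0 hθ1 hr₀1 (fun r hr₀r hrR x hx => ?_)
      fun r hr hrr₀ ih _ x hx => ?_
    · have hr : 0 < r := hr₀.trans_le hr₀r
      calc ENNReal.ofReal (m / R ^ t * r ^ t) ≤ ENNReal.ofReal m := by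
            refine ENNReal.ofReal_le_ofReal ?_
            rw [div_mul_eq_mul_div, div_le_iff₀ (by positivity)]
            exact mul_le_mul_of_nonneg_left (Real.rpow_le_rpow hr.le hrR ht) hm.le
        _ ≤ μ (closedBall x r₀) := hmass x hx
        _ ≤ μ (closedBall x r) := measure_mono (closedBall_subset_closedBall hr₀r)
    · have hr1 : r < 1 := hrr₀.trans hr₀1
      refine ENNReal.ofReal_mul_rpow_le_of_le_rpow_mul (by positivity) hC hr ?_
        (ih ((Real.rpow_le_one hr.le hr1.le hθ0).trans (le_max_left _ _)) x hx)
        (H x hx r hr ((ENNReal.ofReal_lt_iff_lt_toReal hr.le hdiam).2 (hrr₀.trans hr₀D)))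
      calc C * r ^ κ ≤ C * r₀ ^ κ := by gcongr
        _ ≤ 1 := hr₀C.le
  exact ⟨m / R ^ t, by positivity, fun x hx r hr hrD => hbound r hr
    (((ENNReal.ofReal_lt_iff_lt_toReal hr.le hdiam).1 hrD).le.trans (le_max_right _ _)) x hx⟩

theorem HasBoxLowerBound.hasAssouadSpectrumBound [ProperSpace X] [IsLocallyFiniteMeasure μ]
    {θ a : ℝ} (hS : Bornology.IsBounded (measSupport μ)) (hθ0 : 0 ≤ θ) (hθ1 : θ < 1)
    (h : HasBoxLowerBound μ a) : HasAssouadSpectrumBound μ θ (a / (1 - θ)) := by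
  obtain ⟨C, hC, H⟩ := h
  set R := max 1 (ediam (measSupport μ)).toReal
  set K := cthickening R (measSupport μ)
  have hK : μ K ≠ ⊤ :=
    (isCompact_of_isClosed_isBounded isClosed_cthickening hS.cthickening).measure_lt_top.ne
  set M := (μ K).toReal
  refine ⟨(M + 1) / C, by positivity, fun x hx r hr hrD => ?_⟩
  have hrθ : r ^ θ ≤ R := by
    rcases le_or_gt r 1 with h1 | h1
    · exact (Real.rpow_le_one hr.le h1 hθ0).trans (le_max_left _ _)
    · calc r ^ θ ≤ r ^ (1 : ℝ) := Real.rpow_le_rpow_of_exponent_le h1.le hθ1.le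
        _ = r := Real.rpow_one r
        _ ≤ R := ((ENNReal.ofReal_lt_iff_lt_toReal hr.le hS.ediam_ne_top).1 hrD).le.trans
              (le_max_right _ _)
  have hpow : (r ^ θ / r) ^ (a / (1 - θ)) = (r ^ a)⁻¹ := by
    rw [← Real.rpow_sub_one hr.ne', ← Real.rpow_mul hr.le, ← Real.rpow_neg hr.le]
    congr 1
    field_simp [(sub_pos.2 hθ1).ne']
    ring
  calc μ (closedBall x (r ^ θ)) ≤ μ K :=
        measure_mono ((closedBall_subset_closedBall hrθ).trans (closedBall_subset_cthickening hx R))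
    _ ≤ ENNReal.ofReal ((M + 1) / C * (r ^ a)⁻¹ * (C * r ^ a)) := by
        rw [← ENNReal.ofReal_toReal hK]
        refine ENNReal.ofReal_le_ofReal ?_
        field_simp
        linarith
    _ = ENNReal.ofReal ((M + 1) / C * (r ^ θ / r) ^ (a / (1 - θ))) *
          ENNReal.ofReal (C * r ^ a) := by
        rw [hpow, ENNReal.ofReal_mul (by positivity)]
    _ ≤ _ := by gcongr; exact H x hx r hr hrD

end MeasSupport

/-- For a measure `μ` supported on a compact set `F ⊆ ℝ^d` and `θ ∈ (0,1)`,
`(upper box dimension of μ) ≤ dim_A^θ μ ≤ (upper box dimension of μ)/(1-θ)`. -/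
theorem measUpperBoxDim_le_measAssouadSpectrum (d : ℕ)
    (μ : Measure (EuclideanSpace ℝ (Fin d))) [IsLocallyFiniteMeasure μ]
    (F : Set (EuclideanSpace ℝ (Fin d))) (hF : IsCompact F) (hsupp : measSupport μ ⊆ F)
    (θ : ℝ) (hθ : θ ∈ Set.Ioo (0 : ℝ) 1) :
    measUpperBoxDim μ ≤ measAssouadSpectrum μ θ ∧
      measAssouadSpectrum μ θ ≤ measUpperBoxDim μ / (1 - θ) := by
  obtain ⟨hθ0, hθ1⟩ := hθ
  have h1θ : 0 < 1 - θ := sub_pos.2 hθ1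
  have hS : IsCompact (measSupport μ) := hF.of_isClosed_subset isClosed_measSupport hsupp
  rw [measUpperBoxDim_eq_sInf, measAssouadSpectrum_eq_sInf]
  set A := {s | 0 ≤ s ∧ HasAssouadSpectrumBound μ θ s}
  set B := {a | 0 ≤ a ∧ HasBoxLowerBound μ a}
  have hAB : ∀ s ∈ A, ∀ t, s < t → t ∈ B := fun s ⟨hs, h⟩ t hst =>
    ⟨hs.trans hst.le, h.hasBoxLowerBound hS hθ0.le hθ1 (hs.trans hst.le) hst⟩
  have hBA : ∀ a ∈ B, a / (1 - θ) ∈ A := fun a ⟨ha, h⟩ =>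
    ⟨div_nonneg ha h1θ.le, h.hasAssouadSpectrumBound hS.isBounded hθ0.le hθ1⟩
  rcases A.eq_empty_or_nonempty with hA | ⟨s, hs⟩
  · have hB : B = ∅ := Set.eq_empty_of_forall_notMem fun a ha => by
      simpa [hA] using hBA a ha
    simp [hA, hB]
  · exact ⟨Real.sInf_le_sInf_of_forall_lt_mem ⟨0, fun _ h => h.1⟩ ⟨s, hs⟩ hAB,
      Real.sInf_le_sInf_div_of_div_mem h1θ ⟨0, fun _ h => h.1⟩ ⟨s + 1, hAB s hs _ (by linarith)⟩
        hBA⟩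
end

section
/- A metric space X is uniformly perfect (there exists κ ∈ (0,1) such that B(x,R) \ B(x,κR) ≠ ∅ for all x ∈ X and 0 < R < diam(X)) if and only if the lower dimension of X is strictly positive. -/
open Filter MeasureTheory
open scoped Topology ENNReal

/-- `ballCoverNE E r` is the minimal number of balls of diameter `r` needed to cover `E`,
valued in `ℝ≥0∞` (it is `⊤` when no finite cover exists). -/
noncomputable def ballCoverNE {X : Type*} [PseudoMetricSpace X] (E : Set X) (r : ℝ) : ℝ≥0∞ :=
  sInf {n : ℝ≥0∞ | ∃ s : Finset X,
    (s.card : ℝ≥0∞) = n ∧ E ⊆ ⋃ c ∈ s, Metric.closedBall c (r / 2)}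

/-- The lower dimension of a metric space, valued in `ℝ≥0∞`. -/
noncomputable def lowerDimE (X : Type*) [PseudoMetricSpace X] : ℝ≥0∞ :=
  ⨆ a ∈ {a : ℝ | 0 ≤ a ∧ ∃ C : ℝ, 0 < C ∧ ∀ (x : X) (r R : ℝ), 0 < r → r < R →
      ENNReal.ofReal R ≤ EMetric.diam (Set.univ : Set X) →
      ENNReal.ofReal (C * (R / r) ^ a) ≤ ballCoverNE (Metric.closedBall x R) r},
    ENNReal.ofReal a

lemma card_le_ballCoverNE {X : Type*} [MetricSpace X] {E : Set X} {r : ℝ}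
    (S : Finset X) (hS : ↑S ⊆ E)
    (hsep : ∀ a ∈ S, ∀ b ∈ S, a ≠ b → r < dist a b) :
    (S.card : ℝ≥0∞) ≤ ballCoverNE E r := by
  refine le_sInf ?_
  rintro n ⟨s, hcard, hcov⟩
  rw [← hcard]
  refine Nat.cast_le.mpr ?_
  classical
  set f : X → X := fun a => if h : ∃ c ∈ s, dist a c ≤ r / 2 then h.choose else a with hf
  have hmem : ∀ a ∈ S, f a ∈ s ∧ dist a (f a) ≤ r / 2 := by
    intro a ha
    have haE : a ∈ E := hS ha
    have := hcov haE
    simp only [Set.mem_iUnion, Metric.mem_closedBall] at this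
    obtain ⟨c, hc, hdc⟩ := this
    have h : ∃ c ∈ s, dist a c ≤ r / 2 := ⟨c, hc, hdc⟩
    simp only [hf, dif_pos h]
    exact ⟨h.choose_spec.1, h.choose_spec.2⟩
  refine Finset.card_le_card_of_injOn f (fun a ha => (hmem a ha).1) ?_
  intro a ha b hb hab
  by_contra hne
  have h1 := (hmem a ha).2
  have h2 := (hmem b hb).2
  have : dist a b ≤ r := by
    calc dist a b ≤ dist a (f a) + dist (f a) b := dist_triangle _ _ _
    _ = dist a (f a) + dist b (f b) := by rw [hab, dist_comm (f b) b]
    _ ≤ r / 2 + r / 2 := add_le_add h1 h2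
    _ = r := by ring
  exact absurd (hsep a ha b hb hne) (not_lt.mpr this)

lemma sep_sets {X : Type*} [MetricSpace X] {κ : ℝ} (hκ0 : 0 < κ) (hκ1 : κ < 1)
    (hperf : ∀ (x : X) (R : ℝ), 0 < R → ENNReal.ofReal R < EMetric.diam (Set.univ : Set X) →
      (Metric.closedBall x R \ Metric.closedBall x (κ * R)).Nonempty) :
    ∀ (k : ℕ) (p : X) (ρ : ℝ), 0 < ρ → ENNReal.ofReal ρ < EMetric.diam (Set.univ : Set X) →
      ∃ S : Finset X, ↑S ⊆ Metric.closedBall p ρ ∧ 2 ^ k ≤ S.card ∧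
        ∀ a ∈ S, ∀ b ∈ S, a ≠ b → 2 * (κ / 8) ^ k * ρ < dist a b := by
  intro k
  induction k with
  | zero =>
    intro p ρ hρ _
    exact ⟨{p}, by simp [hρ.le], by simp, by simp⟩
  | succ k ih =>
    classical
    intro p ρ hρ hρd
    obtain ⟨q, hq1, hq2⟩ := hperf p (ρ / 2) (by positivity)
      (lt_of_le_of_lt (ENNReal.ofReal_le_ofReal (by linarith)) hρd)
    rw [Metric.mem_closedBall] at hq1
    rw [Metric.mem_closedBall, not_le] at hq2
    set ρ' : ℝ := κ * ρ / 8 with hρ'def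
    have hρ'pos : 0 < ρ' := by positivity
    have hρ'lt : ρ' < ρ := by nlinarith
    have hρ'd : ENNReal.ofReal ρ' < EMetric.diam (Set.univ : Set X) :=
      lt_of_le_of_lt (ENNReal.ofReal_le_ofReal hρ'lt.le) hρd
    obtain ⟨S₁, hS₁b, hS₁c, hS₁s⟩ := ih p ρ' hρ'pos hρ'd
    obtain ⟨S₂, hS₂b, hS₂c, hS₂s⟩ := ih q ρ' hρ'pos hρ'd
    have hpq : κ * ρ / 2 < dist q p := by
      have : κ * (ρ / 2) = κ * ρ / 2 := by ring
      linarith [hq2, this.symm ▸ hq2]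
    have hdisj : Disjoint S₁ S₂ := by
      rw [Finset.disjoint_left]
      intro a ha1 ha2
      have h1 : dist a p ≤ ρ' := Metric.mem_closedBall.mp (hS₁b ha1)
      have h2 : dist a q ≤ ρ' := Metric.mem_closedBall.mp (hS₂b ha2)
      have : dist q p ≤ 2 * ρ' := by
        calc dist q p ≤ dist q a + dist a p := dist_triangle _ _ _
        _ ≤ ρ' + ρ' := add_le_add (dist_comm a q ▸ h2) h1
        _ = 2 * ρ' := by ring
      nlinarith
    refine ⟨S₁ ∪ S₂, ?_, ?_, ?_⟩
    · intro y hy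
      rw [Finset.coe_union, Set.mem_union] at hy
      rcases hy with hy | hy
      · have := Metric.mem_closedBall.mp (hS₁b hy)
        exact Metric.mem_closedBall.mpr (by nlinarith)
      · have h2 : dist y q ≤ ρ' := Metric.mem_closedBall.mp (hS₂b hy)
        refine Metric.mem_closedBall.mpr ?_
        calc dist y p ≤ dist y q + dist q p := dist_triangle _ _ _
        _ ≤ ρ' + ρ / 2 := add_le_add h2 hq1
        _ ≤ ρ := by nlinarith
    · rw [Finset.card_union_of_disjoint hdisj, pow_succ]
      omega
    · have hsepval : 2 * (κ / 8) ^ k * ρ' = 2 * (κ / 8) ^ (k + 1) * ρ := by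
        rw [hρ'def, pow_succ]; ring
      have hsmall : 2 * (κ / 8) ^ (k + 1) * ρ ≤ κ * ρ / 4 := by
        have h1 : (κ / 8) ^ k ≤ 1 := pow_le_one₀ (by positivity) (by linarith)
        rw [pow_succ]
        nlinarith [pow_nonneg (by positivity : (0:ℝ) ≤ κ / 8) k]
      have cross : ∀ a ∈ S₁, ∀ b ∈ S₂, 2 * (κ / 8) ^ (k + 1) * ρ < dist a b := by
        intro a ha b hb
        have h1 : dist a p ≤ ρ' := Metric.mem_closedBall.mp (hS₁b ha)
        have h2 : dist b q ≤ ρ' := Metric.mem_closedBall.mp (hS₂b hb)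
        have : dist q p ≤ dist q b + dist b a + dist a p := dist_triangle4 _ _ _ _
        have hab : κ * ρ / 2 - 2 * ρ' < dist a b := by
          rw [dist_comm a b]
          have := dist_comm b q ▸ h2
          nlinarith [dist_comm b a ▸ dist_comm a b ▸ (rfl : dist a b = dist a b)]
        have : κ * ρ / 2 - 2 * ρ' = κ * ρ / 4 := by rw [hρ'def]; ring
        linarith
      intro a ha b hb hne
      rw [Finset.mem_union] at ha hb
      rcases ha with ha | ha <;> rcases hb with hb | hb
      · exact hsepval ▸ hS₁s a ha b hb hne
      · exact cross a ha b hb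
      · rw [dist_comm]; exact cross b hb a ha
      · exact hsepval ▸ hS₂s a ha b hb hne

/-- A metric space is uniformly perfect (there is `κ ∈ (0,1)` with
`B(x,R) \ B(x,κR) ≠ ∅` for all `x` and `0 < R < diam X`) if and only if its lower
dimension is strictly positive. -/
theorem uniformlyPerfect_iff_lowerDim_pos (X : Type*) [MetricSpace X] :
    (∃ κ : ℝ, 0 < κ ∧ κ < 1 ∧ ∀ (x : X) (R : ℝ), 0 < R →
      ENNReal.ofReal R < EMetric.diam (Set.univ : Set X) →
      (Metric.closedBall x R \ Metric.closedBall x (κ * R)).Nonempty) ↔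
      0 < lowerDimE X := by
  constructor
  · rintro ⟨κ, hκ0, hκ1, hperf⟩
    set L : ℝ := Real.log (8 / κ) with hLdef
    have hL : 0 < L := Real.log_pos (by rw [lt_div_iff₀ hκ0]; linarith)
    set a : ℝ := Real.log 2 / L with hadef
    have ha : 0 < a := div_pos (Real.log_pos one_lt_two) hL
    have hmem : a ∈ {a : ℝ | 0 ≤ a ∧ ∃ C : ℝ, 0 < C ∧ ∀ (x : X) (r R : ℝ), 0 < r → r < R →
        ENNReal.ofReal R ≤ EMetric.diam (Set.univ : Set X) →
        ENNReal.ofReal (C * (R / r) ^ a) ≤ ballCoverNE (Metric.closedBall x R) r} := by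
      refine ⟨ha.le, 1/2, by norm_num, ?_⟩
      intro x r R hr hrR hRd
      have hR : 0 < R := hr.trans hrR
      set t : ℝ := Real.log (R / r) with htdef
      have ht : 0 < t := Real.log_pos ((one_lt_div hr).mpr hrR)
      set k : ℕ := ⌊t / L⌋₊ with hkdef
      have hk1 : (k : ℝ) ≤ t / L := Nat.floor_le (by positivity)
      have hk2 : t / L < k + 1 := Nat.lt_floor_add_one _
      -- r ≤ (κ/8)^k * R
      have hkey1 : r ≤ (κ / 8) ^ k * R := by
        have e1 : r / R = Real.exp (-t) := by
          rw [htdef, Real.exp_neg, Real.exp_log (by positivity), inv_div]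
        have e2 : (κ / 8) ^ k = Real.exp (-((k : ℝ) * L)) := by
          have : Real.exp (-L) = κ / 8 := by
            rw [hLdef, Real.exp_neg, Real.exp_log (by positivity), inv_div]
          rw [← this, ← Real.exp_nat_mul]
          ring_nf
        have hmono : r / R ≤ (κ / 8) ^ k := by
          rw [e1, e2]
          apply Real.exp_le_exp.mpr
          have : (k : ℝ) * L ≤ t := (le_div_iff₀ hL).mp hk1
          linarith
        calc r = r / R * R := by field_simp
          _ ≤ (κ / 8) ^ k * R := by nlinarith
      -- (1/2) * (R/r)^a ≤ 2^k
      have hkey2 : 1 / 2 * (R / r) ^ a ≤ (2 : ℝ) ^ k := by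
        have e1 : (R / r) ^ a = Real.exp (t * a) := by
          rw [Real.rpow_def_of_pos (by positivity), htdef]
        have e2 : t * a = Real.log 2 * (t / L) := by
          rw [hadef]; field_simp
        have e3 : Real.exp (((k : ℝ) + 1) * Real.log 2) = 2 ^ (k + 1) := by
          have := Real.exp_nat_mul (Real.log 2) (k + 1)
          rw [Real.exp_log (by norm_num : (0:ℝ) < 2)] at this
          rw [← this]; push_cast; ring_nf
        have h4 : (R / r) ^ a ≤ 2 ^ (k + 1) := by
          rw [e1, ← e3]
          apply Real.exp_le_exp.mpr
          rw [e2]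
          have hlog2 : 0 < Real.log 2 := Real.log_pos one_lt_two
          nlinarith
        have : (2:ℝ) ^ (k+1) = 2 * 2 ^ k := by ring
        linarith [h4, this ▸ h4]
      have hhalf : ENNReal.ofReal (R / 2) < EMetric.diam (Set.univ : Set X) := by
        calc ENNReal.ofReal (R / 2) < ENNReal.ofReal R := by
              rw [ENNReal.ofReal_lt_ofReal_iff hR]; linarith
          _ ≤ _ := hRd
      obtain ⟨S, hSb, hSc, hSs⟩ := sep_sets hκ0 hκ1 hperf k x (R / 2) (by positivity) hhalf
      have hSb' : ↑S ⊆ Metric.closedBall x R :=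
        hSb.trans (Metric.closedBall_subset_closedBall (by linarith))
      have hsep' : ∀ a ∈ S, ∀ b ∈ S, a ≠ b → r < dist a b := by
        intro p hp q hq hne
        have := hSs p hp q hq hne
        have heq : 2 * (κ / 8) ^ k * (R / 2) = (κ / 8) ^ k * R := by ring
        linarith [heq ▸ this]
      calc ENNReal.ofReal (1 / 2 * (R / r) ^ a) ≤ ENNReal.ofReal ((2:ℝ) ^ k) :=
            ENNReal.ofReal_le_ofReal hkey2
        _ = (2 : ℝ≥0∞) ^ k := by
            rw [ENNReal.ofReal_pow (by norm_num)]; norm_num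
        _ ≤ (S.card : ℝ≥0∞) := by
            have : ((2 ^ k : ℕ) : ℝ≥0∞) ≤ (S.card : ℝ≥0∞) := Nat.cast_le.mpr hSc
            push_cast at this
            exact this
        _ ≤ ballCoverNE (Metric.closedBall x R) r := card_le_ballCoverNE S hSb' hsep'
    calc (0 : ℝ≥0∞) < ENNReal.ofReal a := ENNReal.ofReal_pos.mpr ha
      _ ≤ lowerDimE X := le_biSup _ hmem
  · intro h
    by_contra hnot
    push_neg at hnot
    refine absurd h (not_lt.mpr ?_)
    refine iSup₂_le ?_
    rintro a ⟨ha0, C, hC, hmain⟩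
    rw [← ENNReal.ofReal_zero]
    apply ENNReal.ofReal_le_ofReal
    by_contra hapos'
    push_neg at hapos'
    have hapos : 0 < a := hapos'
    have hCa : 0 < C ^ a⁻¹ := Real.rpow_pos_of_pos hC _
    set m : ℝ := min (1 / 2) (C ^ a⁻¹ / 2) with hmdef
    have hm0 : 0 < m := lt_min (by norm_num) (by positivity)
    have hm1 : m ≤ 1 / 2 := min_le_left _ _
    obtain ⟨x, R, hR, hRd, hemp⟩ := hnot (m / 2) (by positivity) (by linarith)
    have hsub : Metric.closedBall x R ⊆ Metric.closedBall x (m / 2 * R) := by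
      intro y hy
      by_contra hy2
      exact Set.eq_empty_iff_forall_notMem.mp hemp y ⟨hy, hy2⟩
    set r : ℝ := m * R with hrdef
    have hr0 : 0 < r := by positivity
    have hrR : r < R := by nlinarith
    have hcov : ballCoverNE (Metric.closedBall x R) r ≤ 1 := by
      refine sInf_le ⟨{x}, by simp, ?_⟩
      intro y hy
      simp only [Finset.mem_singleton, Set.mem_iUnion, exists_prop]
      refine ⟨x, rfl, ?_⟩
      have := hsub hy
      rw [Metric.mem_closedBall] at this ⊢
      rw [show r / 2 = m / 2 * R by rw [hrdef]; ring]
      exact this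
    have key := (hmain x r R hr0 hrR hRd.le).trans hcov
    rw [ENNReal.ofReal_le_one] at key
    have hRr : R / r = m⁻¹ := by
      rw [hrdef]
      field_simp
    rw [hRr] at key
    have hma : 0 < m ^ a := Real.rpow_pos_of_pos hm0 a
    have hCle : C ≤ m ^ a := by
      rw [Real.inv_rpow hm0.le] at key
      calc C = C * (m ^ a)⁻¹ * m ^ a := by field_simp
        _ ≤ 1 * m ^ a := mul_le_mul_of_nonneg_right key hma.le
        _ = m ^ a := one_mul _
    have hm2 : m ^ a ≤ C / 2 ^ a := by
      calc m ^ a ≤ (C ^ a⁻¹ / 2) ^ a :=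
            Real.rpow_le_rpow hm0.le (min_le_right _ _) hapos.le
        _ = (C ^ a⁻¹) ^ a / 2 ^ a := Real.div_rpow (by positivity) (by norm_num : (0:ℝ) ≤ 2) a
        _ = C / 2 ^ a := by rw [Real.rpow_inv_rpow hC.le (ne_of_gt hapos)]
    have h2a : (1:ℝ) < 2 ^ a :=
      (Real.one_lt_rpow_iff_of_pos (by norm_num)).mpr (Or.inl ⟨one_lt_two, hapos⟩)
    have : C / 2 ^ a < C := div_lt_self hC h2a
    linarith
end

section
/- Suppose μ is an absolutely continuous probability measure on [0,1] whose density f satisfies f ∈ L^{p₁}[0,1] and 1/f ∈ L^{p₂}[0,1] for some p₁, p₂ ≥ 1 (with f nonzero almost everywhere). Then for all θ ∈ (0,1), the Assouad spectrum satisfies dim_A^θ μ ≤ 1 + (p₁ + θ p₂)/(p₁ p₂ (1−θ)). -/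
open Filter MeasureTheory
open scoped Topology ENNReal

/-!
Write `μ = f · ν` with `ν` Lebesgue measure on `[0,1]`. Hölder's inequality gives the upper bound
`μ(B(x,ρ)) ≤ ‖f‖_{p₁} (2ρ)^{1-1/p₁}`, and Hölder's inequality applied to `1 = f · f⁻¹` with
exponents `1` and `p₂` (a reverse Hölder inequality for `f`) gives the lower bound
`r^{1+1/p₂} ≤ ν(B(x,r))^{1+1/p₂} ≤ ‖1/f‖_{p₂} μ(B(x,r))` for `x ∈ [0,1]`, `r ≤ 1`.
Upper and lower ball exponents `α` and `β` always bound the Assouad spectrum by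
`s = (β - θα)/(1 - θ)`, since `μ(B(x,r^θ)) ≲ r^{θα} = (r^θ/r)^s r^β ≲ (r^θ/r)^s μ(B(x,r))`.
-/

namespace MeasureTheory

variable {α : Type*} [MeasurableSpace α] {ν : Measure α}

theorem withDensity_enorm_apply_le_eLpNorm_mul {E : Type*} [NormedAddCommGroup E] {f : α → E}
    {p : ℝ≥0∞} (hp : 1 ≤ p) (hf : AEStronglyMeasurable f ν) {s : Set α} (hs : MeasurableSet s) :
    ν.withDensity (‖f ·‖ₑ) s ≤ eLpNorm f p ν * ν s ^ (1 - 1 / p.toReal) := by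
  calc ν.withDensity (‖f ·‖ₑ) s = eLpNorm f 1 (ν.restrict s) := by
        rw [withDensity_apply _ hs, eLpNorm_one_eq_lintegral_enorm]
    _ ≤ eLpNorm f p (ν.restrict s) *
          ν.restrict s Set.univ ^ (1 / (1 : ℝ≥0∞).toReal - 1 / p.toReal) :=
        eLpNorm_le_eLpNorm_mul_rpow_measure_univ hp hf.restrict
    _ ≤ eLpNorm f p ν * ν s ^ (1 - 1 / p.toReal) := by
        rw [Measure.restrict_apply_univ, ENNReal.toReal_one, div_one]
        gcongr
        exact Measure.restrict_le_self

theorem measure_rpow_le_eLpNorm_inv_mul_withDensity_enorm {𝕜 : Type*} [NormedDivisionRing 𝕜]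
    {f : α → 𝕜} {p : ℝ} (hp : 0 < p) (hf : AEStronglyMeasurable f ν)
    (hfinv : AEStronglyMeasurable (fun x => (f x)⁻¹) ν) (hf0 : ∀ᵐ x ∂ν, f x ≠ 0) (s : Set α) :
    ν s ^ (1 + 1 / p) ≤
      eLpNorm (fun x => (f x)⁻¹) (ENNReal.ofReal p) ν * ν.withDensity (‖f ·‖ₑ) s := by
  -- `r = p / (p + 1) < 1`, the exponent of `1 = f · f⁻¹` in the generalized Hölder inequality
  set r : ℝ≥0∞ := (1⁻¹ + (ENNReal.ofReal p)⁻¹)⁻¹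
  have : ENNReal.HolderTriple 1 (ENNReal.ofReal p) r := .of _ _
  have hr : 1 / r.toReal = 1 + 1 / p := by
    rw [one_div, ← ENNReal.toReal_inv, inv_inv, inv_one, ENNReal.toReal_add ENNReal.one_ne_top
      (ENNReal.inv_ne_top.2 (ENNReal.ofReal_pos.2 hp).ne'), ENNReal.toReal_inv,
      ENNReal.toReal_ofReal hp.le]
    simp
  have hr0 : r ≠ 0 := by simp [r, hp]
  have hone : (fun _ => (1 : 𝕜)) =ᵐ[ν.restrict s] fun x => f x * (f x)⁻¹ := by
    filter_upwards [ae_restrict_of_ae hf0] with x hx using (mul_inv_cancel₀ hx).symm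
  calc ν s ^ (1 + 1 / p) = eLpNorm (fun _ => (1 : 𝕜)) r (ν.restrict s) := by
        rw [eLpNorm_const' _ hr0 (by simp [r]), hr]
        simp
    _ ≤ 1 * eLpNorm f 1 (ν.restrict s) *
          eLpNorm (fun x => (f x)⁻¹) (ENNReal.ofReal p) (ν.restrict s) := by
        rw [eLpNorm_congr_ae hone]
        exact eLpNorm_le_eLpNorm_mul_eLpNorm_of_nnnorm hf.restrict hfinv.restrict (· * ·) 1
          (ae_of_all _ fun x => by simp [nnnorm_mul])
    _ ≤ eLpNorm (fun x => (f x)⁻¹) (ENNReal.ofReal p) ν * ν.withDensity (‖f ·‖ₑ) s := by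
        rw [one_mul, mul_comm, eLpNorm_one_eq_lintegral_enorm]
        gcongr
        · exact Measure.restrict_le_self
        · exact withDensity_apply_le _ _

end MeasureTheory

theorem Real.ofReal_le_volume_closedBall_inter_Icc {a b x r : ℝ} (hx : x ∈ Set.Icc a b)
    (hr₀ : 0 ≤ r) (hr : r ≤ b - a) :
    ENNReal.ofReal r ≤ volume (Metric.closedBall x r ∩ Set.Icc a b) := by
  rw [Real.closedBall_eq_Icc, Set.Icc_inter_Icc, Real.volume_Icc]
  refine ENNReal.ofReal_le_ofReal ?_
  rcases le_total (x - r) a with h | h <;> rcases le_total (x + r) b with h' | h' <;>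
    simp only [sup_of_le_left, sup_of_le_right, inf_of_le_left, inf_of_le_right, h, h'] <;>
    linarith [hx.1, hx.2]

section BallBounds

variable {S : Set ℝ} {p : ℝ}

theorem withDensity_restrict_closedBall_le {E : Type*} [NormedAddCommGroup E] {f : ℝ → E}
    (hp : 1 ≤ p) (hf : AEStronglyMeasurable f (volume.restrict S)) (x ρ : ℝ) :
    (volume.restrict S).withDensity (‖f ·‖ₑ) (Metric.closedBall x ρ) ≤
      eLpNorm f (.ofReal p) (volume.restrict S) * 2 ^ (1 - 1 / p) *
        ENNReal.ofReal ρ ^ (1 - 1 / p) := by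
  have hα : 0 ≤ 1 - 1 / p := by
    rw [sub_nonneg, div_le_one (by linarith)]
    exact hp
  calc (volume.restrict S).withDensity (‖f ·‖ₑ) (Metric.closedBall x ρ)
      ≤ eLpNorm f (.ofReal p) (volume.restrict S) *
          volume.restrict S (Metric.closedBall x ρ) ^ (1 - 1 / p) := by
        simpa only [ENNReal.toReal_ofReal (by linarith : 0 ≤ p)] using
          withDensity_enorm_apply_le_eLpNorm_mul (ENNReal.one_le_ofReal.2 hp) hf
            measurableSet_closedBall
    _ ≤ eLpNorm f (.ofReal p) (volume.restrict S) * ENNReal.ofReal (2 * ρ) ^ (1 - 1 / p) := by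
        gcongr
        exact (Measure.restrict_apply_le _ _).trans_eq (Real.volume_closedBall x ρ)
    _ = _ := by
        rw [ENNReal.ofReal_mul zero_le_two, ENNReal.mul_rpow_of_nonneg _ _ hα,
          ENNReal.ofReal_ofNat, mul_assoc]

theorem rpow_le_withDensity_restrict_Icc_closedBall {𝕜 : Type*} [NormedDivisionRing 𝕜]
    {a b : ℝ} {f : ℝ → 𝕜} (hp : 0 < p)
    (hf : AEStronglyMeasurable f (volume.restrict (Set.Icc a b)))
    (hfinv : AEStronglyMeasurable (fun x => (f x)⁻¹) (volume.restrict (Set.Icc a b)))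
    (hf0 : ∀ᵐ x ∂(volume.restrict (Set.Icc a b)), f x ≠ 0)
    {x r : ℝ} (hx : x ∈ Set.Icc a b) (hr₀ : 0 ≤ r) (hr : r ≤ b - a) :
    ENNReal.ofReal r ^ (1 + 1 / p) ≤
      eLpNorm (fun x => (f x)⁻¹) (.ofReal p) (volume.restrict (Set.Icc a b)) *
        (volume.restrict (Set.Icc a b)).withDensity (‖f ·‖ₑ) (Metric.closedBall x r) := by
  calc ENNReal.ofReal r ^ (1 + 1 / p)
      ≤ volume.restrict (Set.Icc a b) (Metric.closedBall x r) ^ (1 + 1 / p) := by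
        rw [Measure.restrict_apply measurableSet_closedBall]
        gcongr
        exact Real.ofReal_le_volume_closedBall_inter_Icc hx hr₀ hr
    _ ≤ _ := measure_rpow_le_eLpNorm_inv_mul_withDensity_enorm hp hf hfinv hf0 _

end BallBounds

section AssouadSpectrum

variable {X : Type*} [PseudoMetricSpace X] [MeasurableSpace X] {μ : Measure X}

theorem measSupport_subset_of_ae_mem {s : Set X} (hs : IsClosed s) (hμs : ∀ᵐ x ∂μ, x ∈ s) :
    measSupport μ ⊆ s := by
  intro x hx
  by_contra hxs
  obtain ⟨ε, hε, hball⟩ := Metric.isOpen_iff.1 hs.isOpen_compl x hxs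
  exact hx ε hε (measure_mono_null hball hμs)

theorem measAssouadSpectrum_le_of_ball_bounds {θ α β : ℝ} {A B : ℝ≥0∞} (hθ : θ < 1)
    (hA : A ≠ ∞) (hB : B ≠ ∞) (hs : 0 ≤ (β - θ * α) / (1 - θ))
    (hup : ∀ x ∈ measSupport μ, ∀ ρ : ℝ, 0 < ρ →
      μ (Metric.closedBall x ρ) ≤ A * ENNReal.ofReal ρ ^ α)
    (hlow : ∀ x ∈ measSupport μ, ∀ r : ℝ, 0 < r →
      ENNReal.ofReal r < Metric.ediam (measSupport μ) →
      ENNReal.ofReal r ^ β ≤ B * μ (Metric.closedBall x r)) :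
    measAssouadSpectrum μ θ ≤ (β - θ * α) / (1 - θ) := by
  set s := (β - θ * α) / (1 - θ)
  set C := (A * B).toReal + 1
  have hAB : A * B ≤ ENNReal.ofReal C :=
    (ENNReal.ofReal_toReal (ENNReal.mul_ne_top hA hB)).symm.trans_le
      (ENNReal.ofReal_le_ofReal (by linarith))
  refine csInf_le ⟨0, fun _ h => h.1⟩ ⟨hs, C, by positivity, fun x hx r hr hrd => ?_⟩
  set R := ENNReal.ofReal r
  have hR0 : R ≠ 0 := by simp [R, hr]
  have hexp : (θ - 1) * s = θ * α - β := by
    simp only [s]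
    field_simp [(sub_pos.2 hθ).ne']
    ring
  have hscale : ENNReal.ofReal (C * (r ^ θ / r) ^ s) = ENNReal.ofReal C * R ^ (θ * α - β) := by
    rw [← Real.rpow_sub_one hr.ne', ← Real.rpow_mul hr.le, hexp,
      ENNReal.ofReal_mul (by positivity), ENNReal.ofReal_rpow_of_pos hr]
  calc μ (Metric.closedBall x (r ^ θ)) ≤ A * ENNReal.ofReal (r ^ θ) ^ α :=
        hup x hx _ (Real.rpow_pos_of_pos hr θ)
    _ = A * (R ^ (θ * α - β) * R ^ β) := by
        rw [← ENNReal.ofReal_rpow_of_pos hr, ← ENNReal.rpow_mul,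
          ← ENNReal.rpow_add _ _ hR0 ENNReal.ofReal_ne_top, sub_add_cancel]
    _ ≤ A * (R ^ (θ * α - β) * (B * μ (Metric.closedBall x r))) := by
        gcongr
        exact hlow x hx r hr hrd
    _ = A * B * R ^ (θ * α - β) * μ (Metric.closedBall x r) := by ring
    _ ≤ ENNReal.ofReal (C * (r ^ θ / r) ^ s) * μ (Metric.closedBall x r) := by
        rw [hscale]
        gcongr

end AssouadSpectrum

theorem measAssouadSpectrum_le_of_Lp_general (f : ℝ → ℝ) (p₁ p₂ : ℝ) (hp₁ : 1 ≤ p₁) (hp₂ : 1 ≤ p₂)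
    (μ : Measure ℝ)
    (hμ : μ = (volume.restrict (Set.Icc (0 : ℝ) 1)).withDensity fun x => ENNReal.ofReal (f x))
    (hfpos : ∀ᵐ x ∂(volume.restrict (Set.Icc (0 : ℝ) 1)), 0 < f x)
    (hfLp : MemLp f (ENNReal.ofReal p₁) (volume.restrict (Set.Icc (0 : ℝ) 1)))
    (hfinvLp : MemLp (fun x => (f x)⁻¹) (ENNReal.ofReal p₂)
      (volume.restrict (Set.Icc (0 : ℝ) 1)))
    (θ : ℝ) (hθ : θ ∈ Set.Ioo (0 : ℝ) 1) :
    measAssouadSpectrum μ θ ≤ 1 + (p₁ + θ * p₂) / (p₁ * p₂ * (1 - θ)) := by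
  set ν := volume.restrict (Set.Icc (0 : ℝ) 1)
  have hμ' : μ = ν.withDensity (‖f ·‖ₑ) := hμ.trans <| withDensity_congr_ae <| by
    filter_upwards [hfpos] with x hx using (Real.enorm_of_nonneg hx.le).symm
  have hsupp : measSupport μ ⊆ Set.Icc 0 1 := measSupport_subset_of_ae_mem isClosed_Icc <|
    hμ' ▸ (withDensity_absolutelyContinuous _ _).ae_le (ae_restrict_mem measurableSet_Icc)
  have hdiam : Metric.ediam (measSupport μ) ≤ 1 := by simpa using Metric.ediam_mono hsupp
  have hinv₁ : 1 / p₁ ≤ 1 := (div_le_one (by linarith)).2 hp₁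
  refine (measAssouadSpectrum_le_of_ball_bounds (α := 1 - 1 / p₁) (β := 1 + 1 / p₂) hθ.2
    (ENNReal.mul_ne_top hfLp.2.ne (ENNReal.rpow_ne_top_of_nonneg (by linarith) (by simp)))
    hfinvLp.2.ne ?_ (fun x _ ρ _ => hμ' ▸ withDensity_restrict_closedBall_le hp₁ hfLp.1 x ρ)
    (fun x hx r hr hrd => ?_)).trans_eq ?_
  · have := mul_le_of_le_one_left (sub_nonneg.2 hinv₁) hθ.2.le
    have := one_div_pos.2 (by linarith : (0 : ℝ) < p₁)
    have := one_div_pos.2 (by linarith : (0 : ℝ) < p₂)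
    exact div_nonneg (by linarith) (by linarith [hθ.2])
  · have hr₁ : r ≤ 1 := by simpa using (hrd.trans_le hdiam).le
    exact hμ' ▸ rpow_le_withDensity_restrict_Icc_closedBall (by linarith) hfLp.1 hfinvLp.1
      (hfpos.mono fun _ h => h.ne') (hsupp hx) hr.le (by simpa using hr₁)
  · have : 1 - θ ≠ 0 := by linarith [hθ.2]
    field_simp
    ring

/-- If `μ` is an absolutely continuous probability measure on `[0,1]` whose density `f`
satisfies `f ∈ L^{p₁}` and `1/f ∈ L^{p₂}` (with `f` positive a.e.), then for all
`θ ∈ (0,1)` the Assouad spectrum satisfies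
`dim_A^θ μ ≤ 1 + (p₁ + θ p₂)/(p₁ p₂ (1-θ))`. -/
theorem measAssouadSpectrum_le_of_Lp (f : ℝ → ℝ) (p₁ p₂ : ℝ) (hp₁ : 1 ≤ p₁) (hp₂ : 1 ≤ p₂)
    (hf : Measurable f) (μ : Measure ℝ)
    (hμ : μ = (volume.restrict (Set.Icc (0 : ℝ) 1)).withDensity fun x => ENNReal.ofReal (f x))
    (hprob : IsProbabilityMeasure μ)
    (hfpos : ∀ᵐ x ∂(volume.restrict (Set.Icc (0 : ℝ) 1)), 0 < f x)
    (hfLp : MemLp f (ENNReal.ofReal p₁) (volume.restrict (Set.Icc (0 : ℝ) 1)))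
    (hfinvLp : MemLp (fun x => (f x)⁻¹) (ENNReal.ofReal p₂)
      (volume.restrict (Set.Icc (0 : ℝ) 1)))
    (θ : ℝ) (hθ : θ ∈ Set.Ioo (0 : ℝ) 1) :
    measAssouadSpectrum μ θ ≤ 1 + (p₁ + θ * p₂) / (p₁ * p₂ * (1 - θ)) :=
  measAssouadSpectrum_le_of_Lp_general f p₁ p₂ hp₁ hp₂ μ hμ hfpos hfLp hfinvLp θ hθ
end
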